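/- arXiv:2506.09723 — 3 statements merged into one kernel-verified Lean document; each statement's English description precedes it below -/
import Mathlib

section
/- Let P = {((a, s; 0, 1/a), v) : a ∈ ℝ, a ≠ 0, s ∈ ℝ, v ∈ ℝ²} ⊆ G be the Borel subgroup B ⋉ ℝ², where B is the group of upper triangular matrices in SL(2,ℝ). If (x_n) is a sequence in G such that x_n P x_n⁻¹ converges in the Chabauty sense to a closed subgroup H of G, then there exists x ∈ G with H = x P x⁻¹. In particular, the set of conjugates of P is closed under Chabauty limits. -/
open Filter Topology

noncomputable section

/-- `SL(2,ℝ)`. -/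
abbrev SL2 := Matrix.SpecialLinearGroup (Fin 2) ℝ

/-- The topology on `SL(2,ℝ)` induced from the space of `2×2` real matrices. -/
instance : TopologicalSpace SL2 :=
  TopologicalSpace.induced ((↑) : SL2 → Matrix (Fin 2) (Fin 2) ℝ) inferInstance

/-- The underlying type of the group `G = SL(2,ℝ) ⋉ ℝ²`, with the product topology. -/
abbrev GG := SL2 × (Fin 2 → ℝ)

/-- Multiplication in `G`: `(g,v)(g',v') = (gg', v + g·v')`. -/
def gmul (x y : GG) : GG := (x.1 * y.1, x.2 + (x.1 : Matrix (Fin 2) (Fin 2) ℝ).mulVec y.2)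

/-- The identity element of `G`. -/
def gone : GG := (1, 0)

/-- Inversion in `G`. -/
def ginv (x : GG) : GG := (x.1⁻¹, -((x.1⁻¹ : SL2) : Matrix (Fin 2) (Fin 2) ℝ).mulVec x.2)

/-- The conjugate `x H x⁻¹` of a subset `H ⊆ G` by `x ∈ G`. -/
def conjSet (x : GG) (H : Set GG) : Set GG := (fun h => gmul (gmul x h) (ginv x)) '' H

/-- `H` is a closed subgroup of `G`. -/
def IsClosedSubgroup (H : Set GG) : Prop :=
  IsClosed H ∧ gone ∈ H ∧ (∀ a ∈ H, ∀ b ∈ H, gmul a b ∈ H) ∧ (∀ a ∈ H, ginv a ∈ H)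

/-- Chabauty convergence of a sequence of subsets of a topological space:
(i) every point of the limit is a limit of a sequence of points of the `S n`;
(ii) every limit of a subsequence of points of the `S n` lies in the limit set. -/
def ChabautyTendsto {X : Type*} [TopologicalSpace X] (S : ℕ → Set X) (T : Set X) : Prop :=
  (∀ h ∈ T, ∃ u : ℕ → X, (∀ n, u n ∈ S n) ∧ Tendsto u atTop (𝓝 h)) ∧
  (∀ k : ℕ → ℕ, StrictMono k → ∀ u : ℕ → X, (∀ n, u n ∈ S (k n)) →
    ∀ x : X, Tendsto u atTop (𝓝 x) → x ∈ T)

/-- The Levi subgroup `L = SL(2,ℝ) × {0}`. -/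
def Lset : Set GG := {x | x.2 = 0}

/-- The subgroup `N⁺ ⋉ ℝ² = {((1,s;0,1), v) : s ∈ ℝ, v ∈ ℝ²}`. -/
def NplusR2 : Set GG := {x | ∃ s : ℝ, (x.1 : Matrix (Fin 2) (Fin 2) ℝ) = !![1, s; 0, 1]}

/-- The maximal compact subgroup `K = SO(2,ℝ) × {0}`. -/
def Kset : Set GG :=
  {x | ∃ θ : ℝ, (x.1 : Matrix (Fin 2) (Fin 2) ℝ) =
      !![Real.cos θ, Real.sin θ; -Real.sin θ, Real.cos θ] ∧ x.2 = 0}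

/-- `V_c = {(I,(t,ct)) : t ∈ ℝ}`. -/
def Vc (c : ℝ) : Set GG := {x | ∃ t : ℝ, x.1 = 1 ∧ x.2 = ![t, c * t]}

/-- `V_∞ = {(I,(0,t)) : t ∈ ℝ}`. -/
def Vinf : Set GG := {x | ∃ t : ℝ, x.1 = 1 ∧ x.2 = ![0, t]}

/-- `Ñ⁺ = {(±(1,s;0,1), 0) : s ∈ ℝ}`. -/
def Ntilde : Set GG :=
  {x | (∃ s : ℝ, (x.1 : Matrix (Fin 2) (Fin 2) ℝ) = !![1, s; 0, 1] ∨
      (x.1 : Matrix (Fin 2) (Fin 2) ℝ) = -!![1, s; 0, 1]) ∧ x.2 = 0}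

/-- The diagonal subgroup `A = {(diag(a,1/a), 0) : a > 0}`. -/
def Aset : Set GG :=
  {x | ∃ a : ℝ, 0 < a ∧ (x.1 : Matrix (Fin 2) (Fin 2) ℝ) = !![a, 0; 0, a⁻¹] ∧ x.2 = 0}

/-- `V_{(a,b,c)} = {((1,at;0,1), (ct + abt²/2, bt)) : t ∈ ℝ}`. -/
def Vabc (a b c : ℝ) : Set GG :=
  {x | ∃ t : ℝ, (x.1 : Matrix (Fin 2) (Fin 2) ℝ) = !![1, a * t; 0, 1] ∧
      x.2 = ![c * t + a * b * t ^ 2 / 2, b * t]}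

/-- The upper triangular Borel subgroup `B` of `SL(2,ℝ)`, inside `G`. -/
def Bset : Set GG :=
  {x | ∃ a s : ℝ, a ≠ 0 ∧ (x.1 : Matrix (Fin 2) (Fin 2) ℝ) = !![a, s; 0, a⁻¹] ∧ x.2 = 0}

/-- `W = {((1,s;0,1), (t,0)) : s, t ∈ ℝ} = N⁺ ⋉ {(t,0)}`. -/
def Wset : Set GG :=
  {x | ∃ s t : ℝ, (x.1 : Matrix (Fin 2) (Fin 2) ℝ) = !![1, s; 0, 1] ∧ x.2 = ![t, 0]}

/-- The Borel subgroup `P = B ⋉ ℝ²` of `G`. -/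
def Pset : Set GG :=
  {x | ∃ a s : ℝ, a ≠ 0 ∧ (x.1 : Matrix (Fin 2) (Fin 2) ℝ) = !![a, s; 0, a⁻¹]}

/-- The translation subgroup `ℝ² = {(I,v) : v ∈ ℝ²}`. -/
def R2set : Set GG := {x | x.1 = 1}

/-- The unipotent subgroup `N⁺ = {((1,s;0,1), 0) : s ∈ ℝ}`. -/
def Nplus : Set GG := {x | ∃ s : ℝ, (x.1 : Matrix (Fin 2) (Fin 2) ℝ) = !![1, s; 0, 1] ∧ x.2 = 0}

/-- `V₀ = {(I,(t,0)) : t ∈ ℝ}`. -/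
def V0 : Set GG := {x | ∃ t : ℝ, x.1 = 1 ∧ x.2 = ![t, 0]}

def upperUnipotent (s : ℝ) : SL2 :=
  ⟨!![1, s; 0, 1], by simp [Matrix.det_fin_two_of]⟩

/-!
The conjugate `x P x⁻¹` consists of the elements whose `SL(2,ℝ)` part lies in the conjugate of
the Borel subgroup `B` of `SL(2,ℝ)` by the `SL(2,ℝ)` part of `x`, and by the Iwasawa decomposition
`SL(2,ℝ) = SO(2) B` that part may be replaced by a rotation. The rotation angles have a convergent
subsequence; conjugates of the closed subgroup `B` along a convergent sequence converge in the
Chabauty sense to the conjugate by the limit, and Chabauty limits are unique, so `H` is the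
conjugate of `P` by the limit rotation.
-/

open scoped Pointwise Matrix

/- The topology given to `SL2` above is definitionally Mathlib's subspace topology, so Mathlib's
topological group structure applies. -/
instance : IsTopologicalGroup SL2 := Matrix.SpecialLinearGroup.topologicalGroup

namespace ChabautyTendsto

variable {X : Type*} [TopologicalSpace X] {S : ℕ → Set X} {T T' : Set X}

theorem comp_strictMono (h : ChabautyTendsto S T) {k : ℕ → ℕ} (hk : StrictMono k) :
    ChabautyTendsto (S ∘ k) T :=
  ⟨fun t ht => let ⟨u, huS, hu⟩ := h.1 t ht
    ⟨u ∘ k, fun n => huS (k n), hu.comp hk.tendsto_atTop⟩,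
   fun k' hk' => h.2 (k ∘ k') (hk.comp hk')⟩

theorem subset (h : ChabautyTendsto S T) (h' : ChabautyTendsto S T') : T ⊆ T' := fun t ht =>
  let ⟨u, huS, hu⟩ := h.1 t ht
  h'.2 id strictMono_id u huS t hu

theorem unique (h : ChabautyTendsto S T) (h' : ChabautyTendsto S T') : T = T' :=
  (h.subset h').antisymm (h'.subset h)

theorem preimage_fst {Y : Type*} [TopologicalSpace Y] (h : ChabautyTendsto S T) :
    ChabautyTendsto (fun n => (Prod.fst ⁻¹' S n : Set (X × Y))) (Prod.fst ⁻¹' T) := by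
  refine ⟨fun t ht => ?_, fun k hk u hu t ht =>
    h.2 k hk _ hu t.1 ((continuous_fst.tendsto t).comp ht)⟩
  obtain ⟨u, huS, hu⟩ := h.1 t.1 ht
  exact ⟨fun n => (u n, t.2), huS, hu.prodMk_nhds tendsto_const_nhds⟩

end ChabautyTendsto

section ConjugateSubgroups

variable {G : Type*} [Group G]

theorem Subgroup.mem_conj_smul_iff {K : Subgroup G} {g z : G} :
    z ∈ MulAut.conj g • K ↔ g⁻¹ * z * g ∈ K := by
  rw [Subgroup.mem_pointwise_smul_iff_inv_smul_mem, ← map_inv, MulAut.smul_def,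
    MulAut.conj_apply, inv_inv]

theorem Subgroup.conj_mul_smul_eq {K : Subgroup G} (g : G) {b : G} (hb : b ∈ K) :
    MulAut.conj (g * b) • K = MulAut.conj g • K := by
  rw [map_mul, mul_smul, Subgroup.conj_smul_eq_self_of_mem hb]

theorem chabautyTendsto_conj_smul [TopologicalSpace G] [IsTopologicalGroup G] {K : Subgroup G}
    (hK : IsClosed (K : Set G)) {g : ℕ → G} {g₀ : G} (hg : Tendsto g atTop (𝓝 g₀)) :
    ChabautyTendsto (fun n => ((MulAut.conj (g n) • K : Subgroup G) : Set G))
      (MulAut.conj g₀ • K : Subgroup G) := by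
  refine ⟨fun z hz => ?_, fun k hk u hu z hz => ?_⟩
  · rw [SetLike.mem_coe, Subgroup.mem_conj_smul_iff] at hz
    refine ⟨fun n => g n * (g₀⁻¹ * z * g₀) * (g n)⁻¹, fun n => ?_, ?_⟩
    · rw [SetLike.mem_coe, Subgroup.mem_conj_smul_iff]
      convert hz using 1
      group
    · simpa [mul_assoc] using (hg.mul_const (g₀⁻¹ * z * g₀)).mul hg.inv
  · simp only [SetLike.mem_coe, Subgroup.mem_conj_smul_iff] at hu ⊢
    have hgk := hg.comp hk.tendsto_atTop
    exact hK.mem_of_tendsto ((hgk.inv.mul hz).mul hgk) (Eventually.of_forall hu)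

end ConjugateSubgroups

def borelSubgroup : Subgroup SL2 where
  carrier := {g | (g : Matrix (Fin 2) (Fin 2) ℝ) 1 0 = 0}
  one_mem' := by simp
  mul_mem' := by
    intro a b ha hb
    simp_all [Matrix.mul_apply, Fin.sum_univ_two]
  inv_mem' := by
    intro a ha
    simp_all [Matrix.SpecialLinearGroup.coe_inv, Matrix.adjugate_fin_two]

theorem mem_borelSubgroup {g : SL2} :
    g ∈ borelSubgroup ↔ (g : Matrix (Fin 2) (Fin 2) ℝ) 1 0 = 0 :=
  Iff.rfl

theorem isClosed_borelSubgroup : IsClosed (borelSubgroup : Set SL2) :=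
  isClosed_eq (by fun_prop) continuous_const

theorem mem_Pset_iff {p : GG} : p ∈ Pset ↔ p.1 ∈ borelSubgroup := by
  refine ⟨fun ⟨a, s, _, hp⟩ => by simp [mem_borelSubgroup, hp], fun hp => ?_⟩
  have hdet := Matrix.SpecialLinearGroup.det_coe p.1
  rw [Matrix.det_fin_two, mem_borelSubgroup.1 hp, mul_zero, sub_zero] at hdet
  refine ⟨(p.1 : Matrix (Fin 2) (Fin 2) ℝ) 0 0, (p.1 : Matrix (Fin 2) (Fin 2) ℝ) 0 1,
    left_ne_zero_of_mul_eq_one hdet, ?_⟩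
  rw [← eq_inv_of_mul_eq_one_right hdet, ← mem_borelSubgroup.1 hp]
  exact Matrix.eta_fin_two _

theorem conjSet_Pset_eq (y : GG) :
    conjSet y Pset = Prod.fst ⁻¹' (MulAut.conj y.1 • borelSubgroup : Subgroup SL2) := by
  ext z
  simp only [Set.mem_preimage, SetLike.mem_coe, Subgroup.mem_conj_smul_iff]
  constructor
  · rintro ⟨p, hp, rfl⟩
    simpa [gmul, ginv, mul_assoc] using mem_Pset_iff.1 hp
  · intro hz
    refine ⟨(y.1⁻¹ * z.1 * y.1, ((y.1⁻¹ : SL2) : Matrix (Fin 2) (Fin 2) ℝ) *ᵥ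
      (z.2 - y.2 + (z.1 : Matrix (Fin 2) (Fin 2) ℝ) *ᵥ y.2)), mem_Pset_iff.2 hz, ?_⟩
    have hconj : y.1 * (y.1⁻¹ * z.1 * y.1) = z.1 * y.1 := by group
    have hcancel (v : Fin 2 → ℝ) : (y.1 : Matrix (Fin 2) (Fin 2) ℝ) *ᵥ
        ((y.1⁻¹ : SL2) : Matrix (Fin 2) (Fin 2) ℝ) *ᵥ v = v := by
      rw [Matrix.mulVec_mulVec, ← Matrix.SpecialLinearGroup.coe_mul, mul_inv_cancel,
        Matrix.SpecialLinearGroup.coe_one, Matrix.one_mulVec]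
    refine Prod.ext (by simp only [gmul, ginv]; group) ?_
    simp only [gmul, ginv, hconj, Matrix.SpecialLinearGroup.coe_mul, ← Matrix.mulVec_mulVec,
      Matrix.mulVec_neg, hcancel, Matrix.mulVec_add, Matrix.mulVec_sub]
    abel

def rotationSL2 (θ : ℝ) : SL2 :=
  ⟨!![Real.cos θ, -Real.sin θ; Real.sin θ, Real.cos θ], by
    rw [Matrix.det_fin_two_of]; linear_combination Real.cos_sq_add_sin_sq θ⟩

theorem coe_rotationSL2 (θ : ℝ) : (rotationSL2 θ : Matrix (Fin 2) (Fin 2) ℝ) =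
    !![Real.cos θ, -Real.sin θ; Real.sin θ, Real.cos θ] := rfl

theorem continuous_rotationSL2 : Continuous rotationSL2 :=
  (by fun_prop : Continuous fun θ : ℝ =>
    !![Real.cos θ, -Real.sin θ; Real.sin θ, Real.cos θ]).subtype_mk _

theorem exists_rotationSL2_mul_mem_borelSubgroup (g : SL2) :
    ∃ θ ∈ Set.Icc (-Real.pi) Real.pi, ∃ b ∈ borelSubgroup, g = rotationSL2 θ * b := by
  set w : ℂ := ⟨(g : Matrix (Fin 2) (Fin 2) ℝ) 0 0, (g : Matrix (Fin 2) (Fin 2) ℝ) 1 0⟩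
  refine ⟨Complex.arg w, Set.Ioc_subset_Icc_self (Complex.arg_mem_Ioc w), _, ?_,
    (mul_inv_cancel_left _ g).symm⟩
  have hre : ‖w‖ * Real.cos w.arg = (g : Matrix (Fin 2) (Fin 2) ℝ) 0 0 :=
    Complex.norm_mul_cos_arg w
  have him : ‖w‖ * Real.sin w.arg = (g : Matrix (Fin 2) (Fin 2) ℝ) 1 0 :=
    Complex.norm_mul_sin_arg w
  rw [mem_borelSubgroup, Matrix.SpecialLinearGroup.coe_mul, Matrix.SpecialLinearGroup.coe_inv,
    coe_rotationSL2, Matrix.adjugate_fin_two_of]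
  simp only [Matrix.mul_apply, Fin.sum_univ_two, Matrix.of_apply, Matrix.cons_val',
    Matrix.cons_val_zero, Matrix.cons_val_one, Matrix.empty_val', Matrix.cons_val_fin_one]
  rw [← hre, ← him]
  ring

theorem stmt_10_general (x : ℕ → GG) (H : Set GG)
    (hconv : ChabautyTendsto (fun n => conjSet (x n) Pset) H) :
    ∃ y : GG, H = conjSet y Pset := by
  choose θ hθ b hb hxb using fun n => exists_rotationSL2_mul_mem_borelSubgroup (x n).1
  obtain ⟨θ₀, -, k, hk, hθk⟩ := isCompact_Icc.tendsto_subseq hθ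
  refine ⟨(rotationSL2 θ₀, 0), (hconv.comp_strictMono hk).unique ?_⟩
  have hconj : ∀ n, conjSet (x n) Pset =
      Prod.fst ⁻¹' (MulAut.conj (rotationSL2 (θ n)) • borelSubgroup : Subgroup SL2) := by
    intro n
    rw [conjSet_Pset_eq, hxb n, Subgroup.conj_mul_smul_eq _ (hb n)]
  simp only [Function.comp_def, hconj, conjSet_Pset_eq]
  exact (chabautyTendsto_conj_smul isClosed_borelSubgroup
    ((continuous_rotationSL2.tendsto θ₀).comp hθk)).preimage_fst

/-- Any Chabauty limit of conjugates of the Borel subgroup `P = B ⋉ ℝ²` of `G` is again a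
conjugate of `P`; in particular the set of conjugates of `P` is closed under Chabauty limits. -/
theorem stmt_10 (x : ℕ → GG) (H : Set GG) (hH : IsClosedSubgroup H)
    (hconv : ChabautyTendsto (fun n => conjSet (x n) Pset) H) :
    ∃ y : GG, H = conjSet y Pset :=
  stmt_10_general x H hconv
end
end

section
/- Let K = {(R_θ, 0) : θ ∈ ℝ} ⊆ G, where R_θ is the rotation matrix (cos θ, sin θ; −sin θ, cos θ), and set x_n = (I, (n, 0)) ∈ G for n ∈ ℕ. Then the conjugates x_n K x_n⁻¹ converge in the Chabauty sense to the closed subgroup V_∞ = {(I, (0, t)) : t ∈ ℝ}. -/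
open Filter Topology

noncomputable section

/-!
Conjugating `(R_θ, 0)` by `(I, (n, 0))` gives `(R_θ, (n (1 - cos θ), n sin θ))`. Taking
`θ = t / n` produces `(I, (0, t))` in the limit, since `n sin (t / n) → t`. Conversely, if such
elements converge along `n = k_j → ∞`, then both translation coordinates stay bounded, which
forces `sin θ_j → 0` and `cos θ_j → 1`; so the rotation part tends to `I`, and
`k_j (1 - cos θ_j) = k_j sin θ_j · sin θ_j / (1 + cos θ_j) → 0`.
-/

open Real Matrix

def rotSL (θ : ℝ) : SL2 :=
  ⟨!![cos θ, sin θ; -sin θ, cos θ], by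
    simp [det_fin_two_of]
    nlinarith [sin_sq_add_cos_sq θ]⟩

lemma coe_rotSL (θ : ℝ) :
    (rotSL θ : Matrix (Fin 2) (Fin 2) ℝ) = !![cos θ, sin θ; -sin θ, cos θ] := rfl

lemma isEmbedding_coe_SL2 : IsEmbedding (fun g : SL2 => (g : Matrix (Fin 2) (Fin 2) ℝ)) :=
  ⟨⟨rfl⟩, Subtype.coe_injective⟩

instance : T2Space SL2 := isEmbedding_coe_SL2.t2Space

lemma mem_Kset_iff {x : GG} : x ∈ Kset ↔ ∃ θ, x = (rotSL θ, 0) := by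
  constructor
  · rintro ⟨θ, h1, h2⟩
    exact ⟨θ, Prod.ext (Subtype.ext h1) h2⟩
  · rintro ⟨θ, rfl⟩
    exact ⟨θ, rfl, rfl⟩

lemma mem_Vinf_iff {x : GG} : x ∈ Vinf ↔ x.1 = 1 ∧ x.2 0 = 0 := by
  constructor
  · rintro ⟨t, h1, h2⟩
    simp [h1, h2]
  · rintro ⟨h1, h2⟩
    refine ⟨x.2 1, h1, ?_⟩
    ext i
    fin_cases i <;> simp [h2]

lemma conj_by_translation (v : Fin 2 → ℝ) (g : SL2) :
    gmul (gmul ((1 : SL2), v) (g, 0)) (ginv ((1 : SL2), v)) =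
      (g, v - (g : Matrix (Fin 2) (Fin 2) ℝ) *ᵥ v) := by
  simp only [gmul, ginv, inv_one, mulVec_zero, mulVec_neg, one_mul, mul_one, add_zero,
    sub_eq_add_neg]
  simp

lemma mem_conjSet_Kset_iff (a : ℝ) (u : GG) :
    u ∈ conjSet ((1 : SL2), ![a, 0]) Kset ↔
      ∃ θ, u = (rotSL θ, ![a * (1 - cos θ), a * sin θ]) := by
  have key : ∀ θ, ![a, 0] - (rotSL θ : Matrix (Fin 2) (Fin 2) ℝ) *ᵥ ![a, 0] =
      ![a * (1 - cos θ), a * sin θ] := fun θ => by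
    ext i
    fin_cases i <;> simp [coe_rotSL, mul_sub]
  simp only [conjSet, Set.mem_image, mem_Kset_iff]
  constructor
  · rintro ⟨_, ⟨θ, rfl⟩, rfl⟩
    exact ⟨θ, by rw [conj_by_translation, key]⟩
  · rintro ⟨θ, rfl⟩
    exact ⟨_, ⟨θ, rfl⟩, by rw [conj_by_translation, key]⟩

lemma isClosedSubgroup_Vinf : IsClosedSubgroup Vinf := by
  have hV : Vinf = {x : GG | x.1 = 1} ∩ {x | x.2 0 = 0} := Set.ext fun _ => mem_Vinf_iff
  refine ⟨?_, ?_, ?_, ?_⟩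
  · rw [hV]
    exact (isClosed_eq continuous_fst continuous_const).inter
      (isClosed_eq ((continuous_apply 0).comp continuous_snd) continuous_const)
  · simp [mem_Vinf_iff, gone]
  · simp +contextual [mem_Vinf_iff, gmul]
  · simp +contextual [mem_Vinf_iff, ginv]

lemma tendsto_nat_mul_sin_div (t : ℝ) :
    Tendsto (fun n : ℕ => n * sin (t / n)) atTop (𝓝 t) := by
  -- `n sin (t / n)` is the difference quotient of `x ↦ sin (t x)` at `0` with step `1 / n`.
  have hderiv : HasDerivAt (fun x => sin (t * x)) t 0 := by
    simpa using ((hasDerivAt_id (0 : ℝ)).const_mul t).sin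
  have hinv : Tendsto (fun n : ℕ => (n : ℝ)⁻¹) atTop (𝓝[≠] 0) :=
    tendsto_nhdsWithin_iff.2 ⟨tendsto_inv_atTop_nhds_zero_nat,
      (eventually_ne_atTop 0).mono fun n hn => by simpa using hn⟩
  refine ((hasDerivAt_iff_tendsto_slope.1 hderiv).comp hinv).congr' ?_
  filter_upwards [eventually_ne_atTop 0] with n hn
  simp [slope_def_field, div_eq_mul_inv, mul_comm]

section Limits

variable {α : Type*} {l : Filter α}

lemma tendsto_rotSL_one {θ : α → ℝ} (hcos : Tendsto (fun x => cos (θ x)) l (𝓝 1))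
    (hsin : Tendsto (fun x => sin (θ x)) l (𝓝 0)) : Tendsto (fun x => rotSL (θ x)) l (𝓝 1) := by
  rw [isEmbedding_coe_SL2.tendsto_nhds_iff]
  refine tendsto_pi_nhds.2 fun i => tendsto_pi_nhds.2 fun j => ?_
  fin_cases i <;> fin_cases j
  · simpa [coe_rotSL] using hcos
  · simpa [coe_rotSL] using hsin
  · simpa [coe_rotSL] using hsin.neg
  · simpa [coe_rotSL] using hcos

lemma tendsto_zero_of_tendsto_mul {a f : α → ℝ} {L : ℝ} (ha : Tendsto a l atTop)
    (h : Tendsto (fun x => a x * f x) l (𝓝 L)) : Tendsto f l (𝓝 0) := by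
  have h' := h.mul (tendsto_inv_atTop_zero.comp ha)
  rw [mul_zero] at h'
  refine h'.congr' ?_
  filter_upwards [ha.eventually_gt_atTop 0] with x hx
  simp [hx.ne', mul_comm (a x)]

/-- `1 - cos θ = sin θ ^ 2 / (1 + cos θ)` is of second order in `sin θ`. -/
lemma tendsto_mul_one_sub_cos {a θ : α → ℝ} {L : ℝ}
    (h : Tendsto (fun x => a x * sin (θ x)) l (𝓝 L))
    (hcos : Tendsto (fun x => cos (θ x)) l (𝓝 1)) (hsin : Tendsto (fun x => sin (θ x)) l (𝓝 0)) :
    Tendsto (fun x => a x * (1 - cos (θ x))) l (𝓝 0) := by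
  have h' := h.mul (hsin.div (tendsto_const_nhds.add hcos) (by norm_num : (1 : ℝ) + 1 ≠ 0))
  rw [zero_div, mul_zero] at h'
  refine h'.congr' ?_
  filter_upwards [hcos.eventually (eventually_gt_nhds one_pos)] with x hx
  have : 1 + cos (θ x) ≠ 0 := by positivity
  simp only [Pi.div_apply]
  field_simp
  linear_combination a x * sin_sq_add_cos_sq (θ x)

lemma mem_Vinf_of_tendsto [l.NeBot] {a θ : α → ℝ} (ha : Tendsto a l atTop) {x : GG}
    (hx : Tendsto (fun y => (rotSL (θ y), ![a y * (1 - cos (θ y)), a y * sin (θ y)])) l (𝓝 x)) :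
    x ∈ Vinf := by
  have h0 : Tendsto (fun y => a y * (1 - cos (θ y))) l (𝓝 (x.2 0)) := by
    simpa using hx.snd_nhds.apply_nhds 0
  have h1 : Tendsto (fun y => a y * sin (θ y)) l (𝓝 (x.2 1)) := by
    simpa using hx.snd_nhds.apply_nhds 1
  have hcos : Tendsto (fun y => cos (θ y)) l (𝓝 1) := by
    simpa using (tendsto_zero_of_tendsto_mul ha h0).const_sub 1
  have hsin := tendsto_zero_of_tendsto_mul ha h1
  exact mem_Vinf_iff.2 ⟨tendsto_nhds_unique hx.fst_nhds (tendsto_rotSL_one hcos hsin),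
    tendsto_nhds_unique h0 (tendsto_mul_one_sub_cos h1 hcos hsin)⟩

end Limits

/-- With `x_n = (I,(n,0))`, the conjugates `x_n K x_n⁻¹` converge in the Chabauty sense to
the closed subgroup `V_∞`. -/
theorem stmt_14 :
    ChabautyTendsto (fun n => conjSet ((1 : SL2), ![(n : ℝ), 0]) Kset) Vinf ∧
      IsClosedSubgroup Vinf := by
  refine ⟨⟨?_, ?_⟩, isClosedSubgroup_Vinf⟩
  · rintro h ⟨t, h1, h2⟩
    refine ⟨fun n => (rotSL (t / n), ![n * (1 - cos (t / n)), n * sin (t / n)]),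
      fun n => (mem_conjSet_Kset_iff _ _).2 ⟨t / n, rfl⟩, ?_⟩
    have hθ : Tendsto (fun n : ℕ => t / n) atTop (𝓝 0) := tendsto_const_div_atTop_nhds_zero_nat t
    have hcos : Tendsto (fun n : ℕ => cos (t / n)) atTop (𝓝 1) := by
      simpa [Function.comp_def] using (continuous_cos.tendsto 0).comp hθ
    have hsin : Tendsto (fun n : ℕ => sin (t / n)) atTop (𝓝 0) := by
      simpa [Function.comp_def] using (continuous_sin.tendsto 0).comp hθ
    have hvec : Tendsto (fun n : ℕ => ![n * (1 - cos (t / n)), n * sin (t / n)]) atTop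
        (𝓝 ![0, t]) := tendsto_pi_nhds.2 <| Fin.forall_fin_two.2
      ⟨by simpa using tendsto_mul_one_sub_cos (tendsto_nat_mul_sin_div t) hcos hsin,
        by simpa using tendsto_nat_mul_sin_div t⟩
    rw [show h = ((1 : SL2), ![0, t]) from Prod.ext h1 h2]
    exact (tendsto_rotSL_one hcos hsin).prodMk_nhds hvec
  · intro k hk u hu x hx
    choose θ hθ using fun n => (mem_conjSet_Kset_iff _ _).1 (hu n)
    rw [show u = _ from funext hθ] at hx
    exact mem_Vinf_of_tendsto (tendsto_natCast_atTop_atTop.comp hk.tendsto_atTop) hx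

end
end

section
/- Let A = {(diag(a, 1/a), 0) : a > 0} ⊆ G and set g_n = ((1, n; 0, 1), 0) ∈ G for n ∈ ℕ. Then the conjugates g_n A g_n⁻¹ converge in the Chabauty sense to the closed subgroup N⁺ = {((1, s; 0, 1), 0) : s ∈ ℝ}. -/
open Filter Topology

noncomputable section

/-!
Write `A = {diag(e^{-t}, e^t)}`. Conjugating by the shear `u(c) = (1, c; 0, 1)` gives
`(e^{-t}, 2c sinh t; 0, e^t)`. Along `c = k_n → ∞`, a convergent upper-right entry forces
`sinh t_n → 0`, hence `t_n → 0` and the diagonal tends to `1`: every limit lies in `N⁺`.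
Conversely `t_n = arsinh (s / 2n)` makes that entry exactly `s`, and the conjugates tend to `u(s)`.
-/

open Real

lemma coe_upperUnipotent (s : ℝ) :
    (upperUnipotent s : Matrix (Fin 2) (Fin 2) ℝ) = !![1, s; 0, 1] := rfl

lemma upperUnipotent_zero : upperUnipotent 0 = 1 := by
  ext i j
  fin_cases i <;> fin_cases j <;> rfl

lemma upperUnipotent_add (s t : ℝ) :
    upperUnipotent (s + t) = upperUnipotent s * upperUnipotent t := by
  ext i j
  fin_cases i <;> fin_cases j <;> simp [coe_upperUnipotent, add_comm]

lemma upperUnipotent_neg (s : ℝ) : upperUnipotent (-s) = (upperUnipotent s)⁻¹ := by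
  rw [eq_inv_iff_mul_eq_one, ← upperUnipotent_add, neg_add_cancel]
  ext i j
  fin_cases i <;> fin_cases j <;> simp [coe_upperUnipotent]

def diagExp (t : ℝ) : SL2 :=
  ⟨!![exp (-t), 0; 0, exp t], by simp [Matrix.det_fin_two_of, ← exp_add]⟩

lemma gmul_mk_zero (g h : SL2) : gmul (g, 0) (h, 0) = (g * h, 0) := by
  simp [gmul]

lemma ginv_mk_zero (g : SL2) : ginv (g, 0) = (g⁻¹, 0) := by
  simp [ginv]

lemma Nplus_eq_range : Nplus = Set.range fun s => (upperUnipotent s, 0) := by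
  ext ⟨g, v⟩
  constructor
  · rintro ⟨s, hg, rfl⟩
    exact ⟨s, Prod.ext (Subtype.ext hg.symm) rfl⟩
  · rintro ⟨s, hs⟩
    cases hs
    exact ⟨s, rfl, rfl⟩

lemma Aset_eq_range : Aset = Set.range fun t => (diagExp t, 0) := by
  ext ⟨g, v⟩
  constructor
  · rintro ⟨a, ha, hg, rfl⟩
    refine ⟨-log a, Prod.ext (Subtype.ext ?_) rfl⟩
    simp only at hg
    simp [diagExp, hg, exp_log ha, exp_neg]
  · rintro ⟨t, hs⟩
    cases hs
    exact ⟨exp (-t), exp_pos _, by simp [diagExp, exp_neg], rfl⟩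

lemma coe_conj_diagExp (c t : ℝ) :
    ((upperUnipotent c * diagExp t * (upperUnipotent c)⁻¹ : SL2) :
      Matrix (Fin 2) (Fin 2) ℝ) = !![exp (-t), c * (2 * sinh t); 0, exp t] := by
  rw [← upperUnipotent_neg, Matrix.SpecialLinearGroup.coe_mul,
    Matrix.SpecialLinearGroup.coe_mul, coe_upperUnipotent, coe_upperUnipotent, diagExp,
    Matrix.mul_fin_two, Matrix.mul_fin_two, sinh_eq]
  ext i j
  fin_cases i <;> fin_cases j <;> simp; ring

lemma conjSet_Aset (c : ℝ) :
    conjSet (upperUnipotent c, 0) Aset =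
      Set.range fun t => (upperUnipotent c * diagExp t * (upperUnipotent c)⁻¹, 0) := by
  simp only [conjSet, Aset_eq_range, ← Set.range_comp, Function.comp_def, gmul_mk_zero,
    ginv_mk_zero]

lemma mem_Nplus_iff (x : GG) :
    x ∈ Nplus ↔ (x.1 : Matrix (Fin 2) (Fin 2) ℝ) 0 0 = 1 ∧
      (x.1 : Matrix (Fin 2) (Fin 2) ℝ) 1 0 = 0 ∧ (x.1 : Matrix (Fin 2) (Fin 2) ℝ) 1 1 = 1 ∧
      x.2 = 0 := by
  constructor
  · rintro ⟨s, hg, hv⟩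
    simp [hg, hv]
  · rintro ⟨h00, h10, h11, hv⟩
    refine ⟨(x.1 : Matrix (Fin 2) (Fin 2) ℝ) 0 1, ?_, hv⟩
    conv_lhs => rw [Matrix.eta_fin_two (x.1 : Matrix (Fin 2) (Fin 2) ℝ)]
    rw [h00, h10, h11]

lemma isClosed_Nplus : IsClosed Nplus := by
  have hc : Continuous fun x : GG => (x.1 : Matrix (Fin 2) (Fin 2) ℝ) :=
    continuous_induced_dom.comp continuous_fst
  have hentry (i j : Fin 2) : Continuous fun x : GG => (x.1 : Matrix (Fin 2) (Fin 2) ℝ) i j :=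
    (continuous_apply_apply i j).comp hc
  simp only [Set.ext_iff.2 mem_Nplus_iff]
  exact (isClosed_eq (hentry 0 0) continuous_const).inter <|
    (isClosed_eq (hentry 1 0) continuous_const).inter <|
    (isClosed_eq (hentry 1 1) continuous_const).inter (isClosed_eq continuous_snd continuous_const)

lemma isClosedSubgroup_Nplus : IsClosedSubgroup Nplus := by
  refine ⟨isClosed_Nplus, ?_, ?_, ?_⟩ <;> simp only [Nplus_eq_range]
  · exact ⟨0, by simp only [upperUnipotent_zero]; rfl⟩
  · rintro _ ⟨s, rfl⟩ _ ⟨t, rfl⟩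
    exact ⟨s + t, by simp only [gmul_mk_zero, upperUnipotent_add]⟩
  · rintro _ ⟨s, rfl⟩
    exact ⟨-s, by simp only [ginv_mk_zero, upperUnipotent_neg]⟩

lemma tendsto_SL2_iff {ι : Type*} {l : Filter ι} {u : ι → SL2} {g : SL2} :
    Tendsto u l (𝓝 g) ↔ ∀ i j, Tendsto (fun n => (u n : Matrix (Fin 2) (Fin 2) ℝ) i j) l
      (𝓝 ((g : Matrix (Fin 2) (Fin 2) ℝ) i j)) := by
  rw [(Topology.IsInducing.induced _).tendsto_nhds_iff]
  exact tendsto_pi_nhds.trans <| forall_congr' fun _ => tendsto_pi_nhds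

lemma tendsto_zero_of_tendsto_mul_atTop {ι : Type*} {l : Filter ι} {c d : ι → ℝ} {y : ℝ}
    (hc : Tendsto c l atTop) (hcd : Tendsto (fun n => c n * d n) l (𝓝 y)) :
    Tendsto d l (𝓝 0) := by
  refine (hcd.div_atTop hc).congr' ?_
  filter_upwards [hc.eventually_gt_atTop 0] with n hn
  exact mul_div_cancel_left₀ _ hn.ne'

lemma exists_tendsto_conjSet_Aset (s : ℝ) :
    ∃ u : ℕ → GG, (∀ n : ℕ, u n ∈ conjSet (upperUnipotent n, 0) Aset) ∧
      Tendsto u atTop (𝓝 (upperUnipotent s, 0)) := by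
  set t : ℕ → ℝ := fun n => arsinh (s / (2 * n))
  have ht : Tendsto t atTop (𝓝 0) := by
    simpa [t, Function.comp_def] using (continuous_arsinh.tendsto 0).comp <|
      tendsto_const_nhds.div_atTop (tendsto_natCast_atTop_atTop.const_mul_atTop two_pos)
  have hshear : ∀ᶠ n : ℕ in atTop, (n : ℝ) * (2 * sinh (t n)) = s := by
    filter_upwards [eventually_ne_atTop 0] with n hn
    simp only [t, sinh_arsinh]
    field_simp
  refine ⟨fun n : ℕ => (upperUnipotent n * diagExp (t n) * (upperUnipotent n)⁻¹, 0),
    fun n => conjSet_Aset _ ▸ ⟨t n, rfl⟩, ?_⟩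
  refine Tendsto.prodMk_nhds (tendsto_SL2_iff.2 ?_) tendsto_const_nhds
  simp only [coe_conj_diagExp, coe_upperUnipotent, Fin.forall_fin_two, Matrix.of_apply,
    Matrix.cons_val', Matrix.cons_val_zero, Matrix.cons_val_one, Matrix.empty_val',
    Matrix.cons_val_fin_one, tendsto_const_nhds, true_and]
  have htneg : Tendsto (fun n => -t n) atTop (𝓝 0) := by simpa using ht.neg
  exact ⟨⟨tendsto_exp_nhds_zero_nhds_one.comp htneg,
    tendsto_const_nhds.congr' (hshear.mono fun n h => h.symm)⟩,
    tendsto_exp_nhds_zero_nhds_one.comp ht⟩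

lemma mem_Nplus_of_tendsto_conj_diagExp {ι : Type*} {l : Filter ι} [l.NeBot] {c t : ι → ℝ}
    (hc : Tendsto c l atTop) {x : GG}
    (hx : Tendsto (fun n => (upperUnipotent (c n) * diagExp (t n) * (upperUnipotent (c n))⁻¹,
      (0 : Fin 2 → ℝ))) l (𝓝 x)) : x ∈ Nplus := by
  have hentries := tendsto_SL2_iff.1 ((continuous_fst.tendsto x).comp hx)
  simp only [Function.comp_def, coe_conj_diagExp] at hentries
  have h00 := hentries 0 0
  have h01 := hentries 0 1
  have h10 := hentries 1 0
  have h11 := hentries 1 1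
  simp only [Matrix.of_apply, Matrix.cons_val', Matrix.cons_val_zero, Matrix.cons_val_fin_one,
    Matrix.cons_val_one, tendsto_const_nhds_iff] at h00 h01 h10 h11
  have ht : Tendsto t l (𝓝 0) := by
    have := (continuous_arsinh.tendsto _).comp
      ((tendsto_zero_of_tendsto_mul_atTop hc h01).div_const 2)
    simpa [Function.comp_def] using this
  have htneg : Tendsto (fun n => -t n) l (𝓝 0) := by simpa using ht.neg
  rw [mem_Nplus_iff]
  exact ⟨tendsto_nhds_unique h00 (tendsto_exp_nhds_zero_nhds_one.comp htneg), h10.symm,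
    tendsto_nhds_unique h11 (tendsto_exp_nhds_zero_nhds_one.comp ht),
    tendsto_nhds_unique ((continuous_snd.tendsto x).comp hx) tendsto_const_nhds⟩

/-- With `g_n = ((1,n;0,1), 0)`, the conjugates `g_n A g_n⁻¹` converge in the Chabauty sense to
the closed subgroup `N⁺`. -/
theorem stmt_17 :
    ChabautyTendsto (fun n => conjSet (upperUnipotent (n : ℝ), 0) Aset) Nplus ∧
      IsClosedSubgroup Nplus := by
  refine ⟨⟨?_, fun k hk u hu x hx => ?_⟩, isClosedSubgroup_Nplus⟩
  · rw [Nplus_eq_range]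
    rintro _ ⟨s, rfl⟩
    exact exists_tendsto_conjSet_Aset s
  · simp only [conjSet_Aset, Set.mem_range] at hu
    choose t ht using hu
    exact mem_Nplus_of_tendsto_conj_diagExp (c := fun n => (k n : ℝ))
      (tendsto_natCast_atTop_atTop.comp hk.tendsto_atTop) (hx.congr fun n => (ht n).symm)

end
end
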